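/- Let n ≥ 3 and k ≥ 1 with n/gcd(k,n) even. Set g = gcd(k,n), weights (w₁,w₂,w₃,w₄) = (k(n-1)/g, 2k/g, k(n-2)/g, n/g) and d = 2k(n-1)/g. Then the quantity 2g₁ = -1 + gcd(d,w₂)/w₂ + gcd(d,w₃)/w₃ + gcd(d,w₄)/w₄ - d·gcd(w₂,w₃)/(w₂w₃) - d·gcd(w₂,w₄)/(w₂w₄) - d·gcd(w₃,w₄)/(w₃w₄) + d²·gcd(w₂,w₃,w₄)/(w₂w₃w₄) equals gcd(2k, n) - 2. -/

import Mathlib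

/-!
Write `k = g a`, `n = g b` with `a, b` coprime, so the weights become `w₂ = 2a`, `w₃ = a(n-2)`,
`w₄ = b` and `d = 2a(n-1)`. Since `b` is even and `a` is coprime to `b`, and `n - 1` is coprime
to `b ∣ n`, every gcd involving `w₄` collapses to `gcd(2, b) = 2`, while
`gcd(d, w₃) = gcd(w₂, w₃) = 2a` because `n - 2` is even. After these evaluations the sum is
`2n/b - 2 = 2g - 2`, and `gcd(2k, n) = g · gcd(2a, b) = 2g`.
-/

theorem Nat.gcd_eq_two_of_dvd_add_two {m b : ℕ} (hm : 2 ∣ m) (hb : 2 ∣ b) (hbm : b ∣ m + 2) :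
    m.gcd b = 2 :=
  Nat.dvd_antisymm
    ((Nat.dvd_add_right (Nat.gcd_dvd_left m b)).mp ((Nat.gcd_dvd_right m b).trans hbm))
    (Nat.dvd_gcd hm hb)

theorem Nat.gcd_two_mul_succ_self_of_two_dvd {m : ℕ} (hm : 2 ∣ m) : (2 * (m + 1)).gcd m = 2 := by
  rw [show 2 * (m + 1) = 2 + 2 * m by ring, Nat.gcd_add_mul_right_left, Nat.gcd_eq_left hm]

theorem Nat.Coprime.gcd_two_mul_left_of_two_dvd {a b : ℕ} (hab : a.Coprime b) (hb : 2 ∣ b) :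
    (2 * a).gcd b = 2 := by
  rw [hab.gcd_mul_right_cancel, Nat.gcd_eq_left hb]

theorem orlik_two_g1_rational {a b g m : ℚ} (ha : a ≠ 0) (hb : b ≠ 0) (hm : m ≠ 0)
    (hn : g * b = m + 2) :
    -1 + 2 * a / (2 * a) + 2 * a / (a * m) + 2 / b
        - 2 * a * (m + 1) * (2 * a) / (2 * a * (a * m))
        - 2 * a * (m + 1) * 2 / (2 * a * b)
        - 2 * a * (m + 1) * 2 / (a * m * b)
        + (2 * a * (m + 1)) ^ 2 * 2 / (2 * a * (a * m) * b)
      = 2 * g - 2 := by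
  field_simp
  linear_combination (-2 * m) * hn

theorem orlik_two_g1_reduced (a b g m : ℕ) (hab : a.Coprime b) (hb : Even b) (hm : m ≠ 0)
    (hn : g * b = m + 2) :
    -1 + ((2 * a * (m + 1)).gcd (2 * a) : ℚ) / (2 * a : ℕ)
        + ((2 * a * (m + 1)).gcd (a * m) : ℚ) / (a * m : ℕ)
        + ((2 * a * (m + 1)).gcd b : ℚ) / b
        - (2 * a * (m + 1) : ℕ) * ((2 * a).gcd (a * m) : ℚ) / ((2 * a : ℕ) * (a * m : ℕ))
        - (2 * a * (m + 1) : ℕ) * ((2 * a).gcd b : ℚ) / ((2 * a : ℕ) * b)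
        - (2 * a * (m + 1) : ℕ) * ((a * m).gcd b : ℚ) / ((a * m : ℕ) * b)
        + ((2 * a * (m + 1) : ℕ) : ℚ) ^ 2 * (((2 * a).gcd (a * m)).gcd b : ℚ)
            / ((2 * a : ℕ) * (a * m : ℕ) * b)
      = 2 * g - 2 := by
  have h2b : 2 ∣ b := hb.two_dvd
  have hbm : b ∣ m + 2 := ⟨g, by rw [← hn, mul_comm]⟩
  have h2m : 2 ∣ m := (Nat.dvd_add_left (dvd_refl 2)).mp (h2b.trans hbm)
  have ha : a ≠ 0 := by
    rintro rfl
    rw [Nat.coprime_zero_left] at hab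
    omega
  have hb0 : b ≠ 0 := by
    rintro rfl
    simp at hn
  have hm1b : (m + 1).Coprime b :=
    (Nat.coprime_self_add_right.mpr (Nat.coprime_one_right _)).coprime_dvd_right hbm
  have h2ab : (2 * a).gcd b = 2 := hab.gcd_two_mul_left_of_two_dvd h2b
  have hd2 : (2 * a * (m + 1)).gcd (2 * a) = 2 * a := Nat.gcd_mul_right_left _ _
  have hd3 : (2 * a * (m + 1)).gcd (a * m) = 2 * a := by
    rw [mul_comm 2 a, mul_assoc, Nat.gcd_mul_left, Nat.gcd_two_mul_succ_self_of_two_dvd h2m]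
  have hd4 : (2 * a * (m + 1)).gcd b = 2 := by
    rw [hm1b.gcd_mul_right_cancel, h2ab]
  have h23 : (2 * a).gcd (a * m) = 2 * a := by
    rw [mul_comm 2 a, Nat.gcd_mul_left, Nat.gcd_eq_left h2m]
  have h34 : (a * m).gcd b = 2 := by
    rw [hab.gcd_mul_left_cancel, Nat.gcd_eq_two_of_dvd_add_two h2m h2b hbm]
  rw [hd2, hd3, hd4, h23, h2ab, h34]
  push_cast
  exact orlik_two_g1_rational (Nat.cast_ne_zero.mpr ha) (Nat.cast_ne_zero.mpr hb0)
    (Nat.cast_ne_zero.mpr hm) (by exact_mod_cast hn)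

theorem stmt_5_general (n k : ℕ) (hn : 3 ≤ n)
    (g w2 w3 w4 d : ℕ) (hg : g = Nat.gcd k n)
    (hw2 : w2 = 2 * k / g) (hw3 : w3 = k * (n - 2) / g) (hw4 : w4 = n / g)
    (hd : d = 2 * k * (n - 1) / g) (heven : Even (n / g)) :
    -1 + (Nat.gcd d w2 : ℚ) / w2 + (Nat.gcd d w3 : ℚ) / w3 + (Nat.gcd d w4 : ℚ) / w4
        - (d : ℚ) * (Nat.gcd w2 w3 : ℚ) / (w2 * w3)
        - (d : ℚ) * (Nat.gcd w2 w4 : ℚ) / (w2 * w4)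
        - (d : ℚ) * (Nat.gcd w3 w4 : ℚ) / (w3 * w4)
        + (d : ℚ) ^ 2 * (Nat.gcd (Nat.gcd w2 w3) w4 : ℚ) / (w2 * w3 * w4)
      = (Nat.gcd (2 * k) n : ℚ) - 2 := by
  have hg0 : 0 < g := hg ▸ Nat.gcd_pos_of_pos_right k (by omega)
  obtain ⟨a, b, hab, hka, hnb⟩ := Nat.exists_coprime k n
  rw [← hg] at hka hnb
  have hb : n / g = b := by rw [hnb, Nat.mul_div_cancel _ hg0]
  obtain ⟨m, rfl⟩ : ∃ m, n = m + 2 := ⟨n - 2, by omega⟩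
  obtain rfl : w2 = 2 * a := by rw [hw2, hka, ← mul_assoc, Nat.mul_div_cancel _ hg0]
  obtain rfl : w3 = a * m := by
    rw [hw3, hka, Nat.add_sub_cancel, mul_right_comm, Nat.mul_div_cancel _ hg0]
  obtain rfl : b = w4 := (hw4.trans hb).symm
  obtain rfl : d = 2 * a * (m + 1) := by
    rw [hd, hka, show m + 2 - 1 = m + 1 by omega, ← mul_assoc, mul_right_comm _ g,
      Nat.mul_div_cancel _ hg0]
  have hgcd : (2 * k).gcd (m + 2) = 2 * g := by
    rw [hka, hnb, ← mul_assoc, Nat.gcd_mul_right,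
      hab.gcd_two_mul_left_of_two_dvd (hb ▸ heven).two_dvd]
  rw [hgcd]
  exact_mod_cast orlik_two_g1_reduced a b g m hab (hb ▸ heven) (by omega) (by rw [hnb, mul_comm])

/-- Orlik exponent computation for `Dₙ⁽ⁿ⁾[k]`: with `g = gcd(k,n)`,
weights `(w₂,w₃,w₄) = (2k/g, k(n-2)/g, n/g)`, `d = 2k(n-1)/g`, and
`n/g` even, the quantity `2g₁` equals `gcd(2k,n) - 2`. -/
theorem stmt_5 (n k : ℕ) (hn : 3 ≤ n) (hk : 1 ≤ k)
    (g w2 w3 w4 d : ℕ) (hg : g = Nat.gcd k n)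
    (hw2 : w2 = 2 * k / g) (hw3 : w3 = k * (n - 2) / g) (hw4 : w4 = n / g)
    (hd : d = 2 * k * (n - 1) / g) (heven : Even (n / g)) :
    -1 + (Nat.gcd d w2 : ℚ) / w2 + (Nat.gcd d w3 : ℚ) / w3 + (Nat.gcd d w4 : ℚ) / w4
        - (d : ℚ) * (Nat.gcd w2 w3 : ℚ) / (w2 * w3)
        - (d : ℚ) * (Nat.gcd w2 w4 : ℚ) / (w2 * w4)
        - (d : ℚ) * (Nat.gcd w3 w4 : ℚ) / (w3 * w4)
        + (d : ℚ) ^ 2 * (Nat.gcd (Nat.gcd w2 w3) w4 : ℚ) / (w2 * w3 * w4)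
      = (Nat.gcd (2 * k) n : ℚ) - 2 :=
  stmt_5_general n k hn g w2 w3 w4 d hg hw2 hw3 hw4 hd heven
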